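/- If φ is a polynomial of degree at most 3 and φ_i denotes the cell average of φ over [x_{i-1/2}, x_{i+1/2}] with uniform spacing Δx, then the PPM edge-value formula p_{i+1/2} = (7/12)(φ_i + φ_{i+1}) - (1/12)(φ_{i+2} + φ_{i-1}) reproduces the exact point value φ(x_{i+1/2}). -/
import Mathlib


open scoped BigOperators

lemma integral_eval_cubic (P : Polynomial ℝ) (hdeg : P.natDegree ≤ 3) (a b : ℝ) :
    (∫ x in a..b, P.eval x) =
      ∑ n ∈ Finset.range 4, P.coeff n * ((b ^ (n+1) - a ^ (n+1)) / (n+1)) := by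
  have hev : ∀ x : ℝ, P.eval x = ∑ n ∈ Finset.range 4, P.coeff n * x ^ n := by
    intro x
    rw [Polynomial.eval_eq_sum_range' (n := 4) (lt_of_le_of_lt hdeg (by norm_num))]
  simp only [hev]
  rw [intervalIntegral.integral_finset_sum]
  · refine Finset.sum_congr rfl fun n _ => ?_
    rw [intervalIntegral.integral_const_mul, integral_pow]
  · intro n _
    exact (continuous_const.mul (continuous_pow n)).intervalIntegrable a b

/-- For a polynomial `φ` of degree at most 3 with cell averages
`φ_k = (1/Δx) ∫_{(k-1/2)Δx}^{(k+1/2)Δx} φ`, the PPM edge-value formula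
`(7/12)(φ_i + φ_{i+1}) - (1/12)(φ_{i+2} + φ_{i-1})` equals the exact
point value `φ((i+1/2)Δx)`. -/
theorem ppm_edge_value_exact_for_cubics
    (Δx : ℝ) (hΔx : 0 < Δx) (P : Polynomial ℝ) (hdeg : P.natDegree ≤ 3)
    (φbar : ℤ → ℝ)
    (hφbar : ∀ k : ℤ, φbar k =
      (1 / Δx) * ∫ x in (((k : ℝ) - 1/2) * Δx)..(((k : ℝ) + 1/2) * Δx), P.eval x)
    (i : ℤ) :
    (7/12) * (φbar i + φbar (i + 1)) - (1/12) * (φbar (i + 2) + φbar (i - 1))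
      = P.eval (((i : ℝ) + 1/2) * Δx) := by
  have hev : P.eval (((i : ℝ) + 1/2) * Δx)
      = ∑ n ∈ Finset.range 4, P.coeff n * (((i : ℝ) + 1/2) * Δx) ^ n := by
    rw [Polynomial.eval_eq_sum_range' (n := 4) (lt_of_le_of_lt hdeg (by norm_num))]
  simp only [hφbar, integral_eval_cubic P hdeg, hev, Int.cast_add, Int.cast_sub,
    Int.cast_one, Int.cast_ofNat, Int.cast_two]
  simp only [Finset.sum_range_succ, Finset.sum_range_zero]
  have hΔx' : Δx ≠ 0 := ne_of_gt hΔx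
  push_cast
  field_simp
  ring
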